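/- For every n ≥ 2, B_n^{(1,0,1,1)}(x) = Π_{i=0}^{n−3} (3 + i·x) (an empty product for n = 2); in particular, the number of permutations σ ∈ S_n with 1 appearing to the left of n such that mmp^{(1,0,1,1)}(σ) = 0 equals 3^{n−2}. -/

import Mathlib

/-- Number of points in quadrant I relative to `(i, σ i)`. -/
def quad1 {n : ℕ} (σ : Equiv.Perm (Fin n)) (i : Fin n) : ℕ :=
  (Finset.univ.filter (fun j => i < j ∧ σ i < σ j)).card

/-- Number of points in quadrant III relative to `(i, σ i)`. -/
def quad3 {n : ℕ} (σ : Equiv.Perm (Fin n)) (i : Fin n) : ℕ :=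
  (Finset.univ.filter (fun j => j < i ∧ σ j < σ i)).card

/-- Number of points in quadrant IV relative to `(i, σ i)`. -/
def quad4 {n : ℕ} (σ : Equiv.Perm (Fin n)) (i : Fin n) : ℕ :=
  (Finset.univ.filter (fun j => i < j ∧ σ j < σ i)).card

/-- `mmp^{(1,0,1,1)}(σ)`: the number of indices `i` with at least 1 point in
each of quadrants I, III and IV relative to `(i, σ i)`. -/
def mmp1011 {n : ℕ} (σ : Equiv.Perm (Fin n)) : ℕ :=
  (Finset.univ.filter (fun i =>
    1 ≤ quad1 σ i ∧ 1 ≤ quad3 σ i ∧ 1 ≤ quad4 σ i)).card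

/-! Let `q` be the position of the least value `0`, which lies left of the greatest value. An entry
left of `q` always has a larger entry later (the maximum) and a smaller entry later (the `0`), so it
is counted iff it is not a left-to-right minimum of the prefix. An entry right of `q` always has a
smaller entry earlier (the `0`), so it is counted iff it is neither a right-to-left maximum nor a
right-to-left minimum of the suffix. Once the set of `q` values of the prefix is chosen among the
`n - 2` middle values, prefix and suffix are independent, whence
`B_n = ∑ₖ C(n-2, k) ∏_{i<k} (1 + i x) ∏_{i<n-2-k} (2 + i x)`. Each product is the generating
function of its statistic (remove the last, resp. first, entry), and the convolution identity
`∑ₖ C(N, k) ∏_{i<k} (a + i x) ∏_{i<N-k} (b + i x) = ∏_{i<N} (a + b + i x)` gives the result. -/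

open Finset Equiv

def Equiv.subtypeCongrEquiv {α β : Type*} (p : α → Prop) (q : β → Prop) [DecidablePred p]
    [DecidablePred q] :
    {e : α ≃ β // ∀ a, p a ↔ q (e a)} ≃
      ({a // p a} ≃ {b // q b}) × ({a // ¬p a} ≃ {b // ¬q b}) where
  toFun e := (e.1.subtypeEquiv e.2, e.1.subtypeEquiv fun a => not_congr (e.2 a))
  invFun fg := ⟨(sumCompl p).symm.trans ((sumCongr fg.1 fg.2).trans (sumCompl q)),
    fun a => by by_cases h : p a <;> simp [h, (fg.1 _).2, (fg.2 _).2]⟩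
  left_inv e := by ext a; by_cases h : p a <;> simp [h]
  right_inv fg := by ext <;> simp

theorem Equiv.sum_filter_apply_eq {α β M : Type*} [Fintype α] [Fintype β] [DecidableEq α]
    [DecidableEq β] [AddCommMonoid M] (a : α) (b : β) (F : (α ≃ β) → M)
    (G : ({x // x ≠ a} ≃ {y // y ≠ b}) → M)
    (hFG : ∀ e (he : e a = b), F e = G (e.subtypeEquiv fun _ => (e.injective.ne_iff' he).symm)) :
    ∑ e with e a = b, F e = ∑ g, G g := by
  have hmaps (e : α ≃ β) : e a = b ↔ ∀ x, x = a ↔ e x = b :=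
    ⟨fun he x => ⟨fun h => h ▸ he, fun h => e.injective (h.trans he.symm)⟩, fun h => (h a).1 rfl⟩
  rw [sum_subtype (p := fun e : α ≃ β => ∀ x, x = a ↔ e x = b) _ (fun e => by simp [hmaps e]),
    ← (subtypeCongrEquiv (· = a) (· = b)).symm.sum_comp, Fintype.sum_prod_type_right]
  refine Fintype.sum_congr _ _ fun g => ?_
  rw [Fintype.sum_subsingleton _ (ofUnique _ _)]
  refine (hFG _ ?_).trans (congrArg G ?_)
  · exact (((subtypeCongrEquiv (· = a) (· = b)).symm _).2 a).1 rfl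
  · exact congrArg Prod.snd
      ((subtypeCongrEquiv (· = a) (· = b)).apply_symm_apply (ofUnique _ _, g))

theorem Fintype.card_subtype_ne {α : Type*} [Fintype α] [DecidableEq α] (a : α) :
    Fintype.card {x // x ≠ a} = Fintype.card α - 1 := by
  rw [Fintype.card_subtype_compl, Fintype.card_subtype_eq]

theorem Fin.card_subtype_lt {n : ℕ} (q : Fin n) : Fintype.card {i // i < q} = q := by
  rw [Fintype.card_subtype, filter_gt_eq_Iio, Fin.card_Iio]

theorem prod_range_add_add_mul {R : Type*} [CommSemiring R] (a b x : R) (n : ℕ) :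
    ∏ i ∈ range n, (a + b + i * x) = ∑ ij ∈ antidiagonal n,
      (n.choose ij.1 : R) * ((∏ i ∈ range ij.1, (a + i * x)) * ∏ i ∈ range ij.2, (b + i * x)) := by
  induction n with
  | zero => simp
  | succ n ih =>
    rw [sum_antidiagonal_choose_succ_mul
      (fun i j => (∏ l ∈ range i, (a + l * x)) * ∏ l ∈ range j, (b + l * x)),
      prod_range_succ, ih, sum_mul, ← sum_add_distrib]
    refine sum_congr rfl fun ij hij => ?_
    rw [HasAntidiagonal.mem_antidiagonal] at hij
    rw [← Nat.choose_symm_of_eq_add hij.symm, prod_range_succ, prod_range_succ, ← hij]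
    push_cast
    ring

section Statistics

variable {α β : Type*} [LinearOrder α] [Fintype α] [LinearOrder β]

def nonLRMinCount (f : α → β) : ℕ := #{i | ∃ j, j < i ∧ f j < f i}

def nonRLExtremumCount (f : α → β) : ℕ :=
  #{i | (∃ j, i < j ∧ f i < f j) ∧ ∃ j, i < j ∧ f j < f i}

theorem nonLRMinCount_eq_ite_add [DecidableEq α] {a : α} (ha : ∀ j, j ≤ a) (f : α → β) :
    nonLRMinCount f = (if ∃ j, j < a ∧ f j < f a then 1 else 0) +
      nonLRMinCount (fun i : {i // i ≠ a} => f i) := by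
  rw [nonLRMinCount, card_filter, Fintype.sum_eq_add_sum_subtype_ne _ a, nonLRMinCount,
    card_filter]
  congr 1
  refine Fintype.sum_congr _ _ fun i => if_congr ⟨?_, fun ⟨j, hji, hf⟩ => ⟨j, hji, hf⟩⟩ rfl rfl
  rintro ⟨j, hji, hf⟩
  exact ⟨⟨j, (hji.trans_le (ha i)).ne⟩, hji, hf⟩

theorem nonRLExtremumCount_eq_ite_add [DecidableEq α] {a : α} (ha : ∀ j, a ≤ j) (f : α → β) :
    nonRLExtremumCount f =
      (if (∃ j, a < j ∧ f a < f j) ∧ ∃ j, a < j ∧ f j < f a then 1 else 0) +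
        nonRLExtremumCount (fun i : {i // i ≠ a} => f i) := by
  rw [nonRLExtremumCount, card_filter, Fintype.sum_eq_add_sum_subtype_ne _ a, nonRLExtremumCount,
    card_filter]
  congr 1
  have lift (i : {i // i ≠ a}) (P : α → Prop) :
      (∃ j, i.1 < j ∧ P j) ↔ ∃ j : {i // i ≠ a}, i < j ∧ P j :=
    ⟨fun ⟨j, hij, hP⟩ => ⟨⟨j, ((ha i).trans_lt hij).ne'⟩, hij, hP⟩,
      fun ⟨j, hij, hP⟩ => ⟨j, hij, hP⟩⟩
  exact Fintype.sum_congr _ _ fun i => if_congr (and_congr (lift i _) (lift i _)) rfl rfl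

end Statistics

section SumPowIte

variable {R β : Type*} [CommSemiring R] [Fintype β]

theorem sum_pow_ite (x : R) (P : β → Prop) [DecidablePred P] :
    ∑ b, x ^ (if P b then 1 else 0) =
      #{b | ¬P b} + (Fintype.card β - #{b | ¬P b} : ℕ) * x := by
  simp only [pow_ite, pow_one, pow_zero]
  rw [sum_ite, sum_const, sum_const, nsmul_eq_mul, nsmul_eq_mul, mul_one, add_comm, ← card_univ,
    ← card_filter_add_card_filter_not (s := univ) P, Nat.add_sub_cancel]

variable [LinearOrder β]

theorem sum_pow_ite_exists_lt (x : R) {k : ℕ} (hβ : Fintype.card β = k + 1) :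
    ∑ b : β, x ^ (if ∃ c, c < b then 1 else 0) = 1 + k * x := by
  have : Nonempty β := Fintype.card_pos_iff.mp (by omega)
  obtain ⟨b₀, hb₀⟩ : ∃ b₀ : β, ∀ c, b₀ ≤ c := Finite.exists_min id
  have hmin : ({b | ¬∃ c, c < b} : Finset β) = {b₀} := by
    ext b
    simp only [mem_filter, mem_univ, true_and, mem_singleton, not_exists, not_lt]
    exact ⟨fun h => le_antisymm (h b₀) (hb₀ b), fun h c => h ▸ hb₀ c⟩
  rw [sum_pow_ite, hmin, card_singleton, hβ, Nat.add_sub_cancel, Nat.cast_one]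

theorem sum_pow_ite_not_extremum (x : R) {k : ℕ} (hβ : Fintype.card β = k + 2) :
    ∑ b : β, x ^ (if (∃ c, b < c) ∧ ∃ c, c < b then 1 else 0) = 2 + k * x := by
  have : Nontrivial β := Fintype.one_lt_card_iff_nontrivial.mp (by omega)
  obtain ⟨b₀, hb₀⟩ : ∃ b₀ : β, ∀ c, b₀ ≤ c := Finite.exists_min id
  obtain ⟨b₁, hb₁⟩ : ∃ b₁ : β, ∀ c, c ≤ b₁ := Finite.exists_max id
  have hne : b₀ ≠ b₁ := by
    obtain ⟨c, d, hcd⟩ := exists_pair_ne β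
    intro h
    exact hcd ((le_antisymm (h ▸ hb₁ c) (hb₀ c)).trans (le_antisymm (h ▸ hb₁ d) (hb₀ d)).symm)
  have hext : ({b | ¬((∃ c, b < c) ∧ ∃ c, c < b)} : Finset β) = {b₀, b₁} := by
    ext b
    simp only [mem_filter, mem_univ, true_and, mem_insert, mem_singleton, not_and_or, not_exists,
      not_lt]
    constructor
    · rintro (h | h)
      · exact Or.inr (le_antisymm (hb₁ b) (h b₁))
      · exact Or.inl (le_antisymm (h b₀) (hb₀ b))
    · rintro (rfl | rfl)
      · exact Or.inr hb₀
      · exact Or.inl hb₁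
  rw [sum_pow_ite, hext, card_pair hne, hβ, Nat.add_sub_cancel, Nat.cast_two]

end SumPowIte

section GeneratingFunctions

variable {R : Type*} [CommSemiring R] (x : R)
-- Separate `DecidableEq` instances let these lemmas match the instances found on concrete subtypes.
variable {α β : Type*} [LinearOrder α] [Fintype α] [DecidableEq α] [LinearOrder β] [Fintype β]
  [DecidableEq β]

theorem sum_filter_apply_eq_pow_nonLRMinCount {a : α} (ha : ∀ j, j ≤ a) (b : β) :
    ∑ e : α ≃ β with e a = b, x ^ nonLRMinCount e =
      x ^ (if ∃ c, c < b then 1 else 0) *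
        ∑ g : {j // j ≠ a} ≃ {c // c ≠ b}, x ^ nonLRMinCount g := by
  rw [mul_sum]
  refine Equiv.sum_filter_apply_eq a b _ _ fun e he => ?_
  have hcond : (∃ j < a, e j < b) ↔ ∃ c, c < b :=
    ⟨fun ⟨j, _, hj⟩ => ⟨e j, hj⟩, fun ⟨c, hc⟩ => ⟨e.symm c,
      (ha _).lt_of_ne fun h => hc.ne (by rw [← he, ← h, e.apply_symm_apply]), by simpa⟩⟩
  rw [← pow_add, nonLRMinCount_eq_ite_add ha, he, if_congr hcond rfl rfl]
  -- the order on a subtype is the induced one, so both sides compare the same values `e i`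
  rfl

theorem sum_filter_apply_eq_pow_nonRLExtremumCount {a : α} (ha : ∀ j, a ≤ j) (b : β) :
    ∑ e : α ≃ β with e a = b, x ^ nonRLExtremumCount e =
      x ^ (if (∃ c, b < c) ∧ ∃ c, c < b then 1 else 0) *
        ∑ g : {j // j ≠ a} ≃ {c // c ≠ b}, x ^ nonRLExtremumCount g := by
  rw [mul_sum]
  refine Equiv.sum_filter_apply_eq a b _ _ fun e he => ?_
  have hcond (P : β → Prop) (hP : ¬P b) : (∃ j, a < j ∧ P (e j)) ↔ ∃ c, P c :=
    ⟨fun ⟨j, _, hj⟩ => ⟨e j, hj⟩, fun ⟨c, hc⟩ => ⟨e.symm c,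
      (ha _).lt_of_ne' fun h => hP (by rwa [← he, ← h, e.apply_symm_apply]), by simpa⟩⟩
  rw [← pow_add, nonRLExtremumCount_eq_ite_add ha, he,
    if_congr (and_congr (hcond (b < ·) (lt_irrefl b)) (hcond (· < b) (lt_irrefl b))) rfl rfl]
  rfl

theorem sum_pow_nonLRMinCount {k : ℕ} (hα : Fintype.card α = k) (hβ : Fintype.card β = k) :
    ∑ e : α ≃ β, x ^ nonLRMinCount e = ∏ i ∈ range k, (1 + i * x) := by
  induction k generalizing α β with
  | zero =>
    have : IsEmpty α := Fintype.card_eq_zero_iff.mp hα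
    have : IsEmpty β := Fintype.card_eq_zero_iff.mp hβ
    simp [nonLRMinCount, Fintype.card_equiv (equivOfIsEmpty α β)]
  | succ k ih =>
    have : Nonempty α := Fintype.card_pos_iff.mp (by omega)
    obtain ⟨a, ha⟩ : ∃ a : α, ∀ j, j ≤ a := Finite.exists_max id
    have hrest (b : β) :
        ∑ g : {j // j ≠ a} ≃ {c // c ≠ b}, x ^ nonLRMinCount g = ∏ i ∈ range k, (1 + i * x) :=
      ih (by rw [Fintype.card_subtype_ne, hα, Nat.add_sub_cancel])
        (by rw [Fintype.card_subtype_ne, hβ, Nat.add_sub_cancel])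
    rw [← sum_fiberwise univ (· a), sum_congr rfl fun b _ => by
      rw [sum_filter_apply_eq_pow_nonLRMinCount x ha b, hrest],
      ← sum_mul, sum_pow_ite_exists_lt x hβ, prod_range_succ, mul_comm]

theorem sum_pow_nonRLExtremumCount {r : ℕ} (hα : Fintype.card α = r + 1)
    (hβ : Fintype.card β = r + 1) :
    ∑ e : α ≃ β, x ^ nonRLExtremumCount e = ∏ i ∈ range r, (2 + i * x) := by
  induction r generalizing α β with
  | zero =>
    have : Subsingleton α := Fintype.card_le_one_iff_subsingleton.mp hα.le
    have hzero (e : α ≃ β) : nonRLExtremumCount e = 0 :=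
      card_eq_zero.mpr <| filter_eq_empty_iff.mpr fun i _ ⟨⟨j, hij, _⟩, _⟩ =>
        hij.ne (Subsingleton.elim i j)
    simp [hzero, Fintype.card_equiv (Fintype.equivOfCardEq (hα.trans hβ.symm)), hα]
  | succ r ih =>
    have : Nonempty α := Fintype.card_pos_iff.mp (by omega)
    obtain ⟨a, ha⟩ : ∃ a : α, ∀ j, a ≤ j := Finite.exists_min id
    have hrest (b : β) : ∑ g : {j // j ≠ a} ≃ {c // c ≠ b}, x ^ nonRLExtremumCount g =
        ∏ i ∈ range r, (2 + i * x) :=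
      ih (by rw [Fintype.card_subtype_ne, hα, Nat.add_sub_cancel])
        (by rw [Fintype.card_subtype_ne, hβ, Nat.add_sub_cancel])
    rw [← sum_fiberwise univ (· a), sum_congr rfl fun b _ => by
      rw [sum_filter_apply_eq_pow_nonRLExtremumCount x ha b, hrest],
      ← sum_mul, sum_pow_ite_not_extremum x hβ, prod_range_succ, mul_comm]

end GeneratingFunctions

theorem mmp1011_eq_card {n : ℕ} (σ : Perm (Fin n)) :
    mmp1011 σ = #{i | (∃ j, i < j ∧ σ i < σ j) ∧ (∃ j, j < i ∧ σ j < σ i) ∧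
      ∃ j, i < j ∧ σ j < σ i} := by
  simp only [mmp1011, quad1, quad3, quad4, one_le_card, filter_nonempty_iff, mem_univ, true_and]

theorem mmp1011_eq_add {n : ℕ} (σ : Perm (Fin n)) {q z : Fin n} (hq : ∀ j, σ q ≤ σ j)
    (hqz : q < z) (hz : ∀ j, σ j ≤ σ z) :
    mmp1011 σ = nonLRMinCount (fun i : {i // i < q} => σ i) +
      nonRLExtremumCount (fun i : {i // ¬i < q} => σ i) := by
  rw [mmp1011_eq_card, card_filter, ← Fintype.sum_subtype_add_sum_subtype (· < q),
    nonLRMinCount, nonRLExtremumCount, card_filter, card_filter]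
  have hlt {i j : Fin n} (hij : i ≠ j) (hle : σ i ≤ σ j) : σ i < σ j :=
    hle.lt_of_ne (σ.injective.ne hij)
  congr 1 <;> refine Fintype.sum_congr _ _ fun i => if_congr ?_ rfl rfl
  · have hi : (i : Fin n) < q := i.2
    refine ⟨fun ⟨_, ⟨j, hji, hj⟩, _⟩ => ⟨⟨j, hji.trans hi⟩, hji, hj⟩,
      fun ⟨j, hji, hj⟩ => ⟨?_, ⟨j, hji, hj⟩, ?_⟩⟩
    · exact ⟨z, hi.trans hqz, hlt (hi.trans hqz).ne (hz _)⟩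
    · exact ⟨q, hi, hlt hi.ne' (hq _)⟩
  · have hi : q ≤ (i : Fin n) := not_lt.mp i.2
    have lift (P : Fin n → Prop) :
        (∃ j, (i : Fin n) < j ∧ P j) ↔ ∃ j : {i // ¬i < q}, i < j ∧ P j :=
      ⟨fun ⟨j, hij, hj⟩ => ⟨⟨j, (hi.trans hij.le).not_gt⟩, hij, hj⟩,
        fun ⟨j, hij, hj⟩ => ⟨j, hij, hj⟩⟩
    refine ⟨fun ⟨hA, _, hC⟩ => ⟨(lift _).1 hA, (lift _).1 hC⟩,
      fun ⟨hA, hC⟩ => ⟨(lift _).2 hA, ⟨q, hi.lt_of_ne ?_, hlt ?_ (hq _)⟩, (lift _).2 hC⟩⟩ <;>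
    · intro h
      obtain ⟨j, -, hj⟩ := hC
      exact (hq j).not_gt (hj.trans_eq (congrArg σ h.symm))

theorem Equiv.Perm.lt_symm_last {m : ℕ} {σ : Perm (Fin (m + 2))} {q : Fin (m + 2)}
    {S : Finset (Fin (m + 2))} (hσ : ∀ i, i < q ↔ σ i ∈ S) (hS : Fin.last _ ∉ S)
    (hq : σ q = 0) : q < σ.symm (Fin.last _) := by
  refine lt_of_le_of_ne (not_lt.mp fun hlt => hS ?_) fun h => ?_
  · simpa using (hσ _).1 hlt
  · simp [h] at hq

section Decomposition

variable {R : Type*} [CommSemiring R] (x : R) {m : ℕ}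

theorem sum_pow_mmp1011_fiber {q : Fin (m + 2)} {S : Finset (Fin (m + 2))}
    (hS : S ⊆ Ioo 0 (Fin.last _)) (hSq : #S = q) :
    ∑ σ : Perm (Fin (m + 2)) with (∀ i, i < q ↔ σ i ∈ S) ∧ σ q = 0, x ^ mmp1011 σ =
      (∏ i ∈ range q, (1 + i * x)) * ∏ i ∈ range (m - q), (2 + i * x) := by
  have h0 : (0 : Fin (m + 2)) ∉ S := fun h => (mem_Ioo.mp (hS h)).1.false
  have hlast : Fin.last (m + 1) ∉ S := fun h => (mem_Ioo.mp (hS h)).2.false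
  have hqm : (q : ℕ) ≤ m := hSq ▸ (card_le_card hS).trans (by simp)
  let q' : {i // ¬i < q} := ⟨q, lt_irrefl q⟩
  let z' : {v // v ∉ S} := ⟨0, h0⟩
  -- `σ` is glued from a bijection of the positions `< q` onto `S` and a bijection of the
  -- remaining positions onto the remaining values, whose first position `q'` must go to `z'`.
  rw [← filter_filter, sum_filter,
    sum_subtype _ (p := fun σ : Perm (Fin (m + 2)) => ∀ i, i < q ↔ σ i ∈ S) (by simp),
    Fintype.sum_equiv (subtypeCongrEquiv (· < q) (· ∈ S)) _ (fun fg => x ^ nonLRMinCount fg.1 *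
      if fg.2 q' = z' then x ^ nonRLExtremumCount fg.2 else 0) ?_, Fintype.sum_prod_type]
  · simp only [← mul_sum, ← sum_mul, ← sum_filter]
    have hq' (j : {i // ¬i < q}) : q' ≤ j := not_lt.mp j.2
    have hz' : ¬∃ c, c < z' := fun ⟨c, hc⟩ => Fin.not_lt_zero (c : Fin (m + 2)) hc
    have hcardS : Fintype.card {v // v ∈ S} = q := by rw [Fintype.card_coe, hSq]
    have hcard_pos : Fintype.card {j : {i // ¬i < q} // j ≠ q'} = m - q + 1 := by
      rw [Fintype.card_subtype_ne, Fintype.card_subtype_compl, Fin.card_subtype_lt,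
        Fintype.card_fin]
      omega
    have hcard_val : Fintype.card {c : {v // v ∉ S} // c ≠ z'} = m - q + 1 := by
      rw [Fintype.card_subtype_ne, Fintype.card_subtype_compl, hcardS, Fintype.card_fin]
      omega
    rw [sum_filter_apply_eq_pow_nonRLExtremumCount x hq' z', if_neg (by tauto), pow_zero,
      one_mul, sum_pow_nonLRMinCount x (Fin.card_subtype_lt q) hcardS,
      sum_pow_nonRLExtremumCount x hcard_pos hcard_val]
  · rintro ⟨σ, hσ⟩
    by_cases h : σ q = 0
    · rw [if_pos h, if_pos (Subtype.ext h), ← pow_add, mmp1011_eq_add σ (fun _ => h ▸ Fin.zero_le _)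
        (Perm.lt_symm_last hσ hlast h) (fun _ => by simp [Fin.le_last])]
      rfl
    · rw [if_neg h, if_neg fun h' => h (congrArg Subtype.val h'), mul_zero]

theorem sum_pow_mmp1011_symm_zero_eq (q : Fin (m + 2)) :
    ∑ σ ∈ {σ : Perm (Fin (m + 2)) | σ.symm 0 < σ.symm (Fin.last _)} with σ.symm 0 = q,
      x ^ mmp1011 σ =
      m.choose q * ((∏ i ∈ range q, (1 + i * x)) * ∏ i ∈ range (m - q), (2 + i * x)) := by
  rw [← sum_fiberwise_of_maps_to (t := powersetCard q (Ioo 0 (Fin.last _)))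
    (g := fun σ : Perm (Fin (m + 2)) => ({v | σ.symm v < q} : Finset _)) ?maps]
  case maps =>
    intro σ hσ
    obtain ⟨hlt, h0⟩ : σ.symm 0 < σ.symm (Fin.last _) ∧ σ.symm 0 = q := by simpa using hσ
    refine mem_powersetCard.mpr ⟨fun v hv => ?_, ?_⟩
    · have hv : σ.symm v < q := by simpa using hv
      refine mem_Ioo.mpr ⟨Fin.pos_iff_ne_zero.mpr ?_, Fin.lt_last_iff_ne_last.mpr ?_⟩ <;>
        rintro rfl
      · exact hv.ne h0
      · exact lt_asymm hv (h0 ▸ hlt)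
    · rw [← Fintype.card_subtype,
        Fintype.card_congr (σ.symm.subtypeEquivOfSubtype (p := (· < q))), Fin.card_subtype_lt]
  have hfiber (S : Finset (Fin (m + 2))) (hS : S ∈ powersetCard q (Ioo 0 (Fin.last (m + 1)))) :
      ∑ σ ∈ {σ ∈ {σ : Perm (Fin (m + 2)) | σ.symm 0 < σ.symm (Fin.last _)} | σ.symm 0 = q} with
        ({v | σ.symm v < q} : Finset _) = S, x ^ mmp1011 σ =
      (∏ i ∈ range q, (1 + i * x)) * ∏ i ∈ range (m - q), (2 + i * x) := by
    obtain ⟨hSM, hSq⟩ := mem_powersetCard.mp hS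
    rw [filter_filter, filter_filter, ← sum_pow_mmp1011_fiber x hSM hSq]
    refine sum_congr (filter_congr fun σ _ => ?_) fun _ _ => rfl
    have himg : ({v | σ.symm v < q} : Finset _) = S ↔ ∀ i, i < q ↔ σ i ∈ S := by
      simp only [Finset.ext_iff, mem_filter, mem_univ, true_and]
      exact ⟨fun h i => by simpa using h (σ i), fun h v => by simpa using h (σ.symm v)⟩
    have hlast : Fin.last (m + 1) ∉ S := fun h => (mem_Ioo.mp (hSM h)).2.false
    rw [himg]
    refine ⟨fun ⟨_, h0, hσ⟩ => ⟨hσ, by rw [← h0, σ.apply_symm_apply]⟩, fun ⟨hσ, h0⟩ => ?_⟩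
    have h0' : σ.symm 0 = q := σ.symm_apply_eq.mpr h0.symm
    exact ⟨h0' ▸ σ.lt_symm_last hσ hlast h0, h0', hσ⟩
  rw [sum_congr rfl hfiber, sum_const, card_powersetCard, Fin.card_Ioo, nsmul_eq_mul]
  simp

theorem sum_pow_mmp1011 (m : ℕ) :
    ∑ σ : Perm (Fin (m + 2)) with σ.symm 0 < σ.symm (Fin.last _), x ^ mmp1011 σ =
      ∏ i ∈ range m, (3 + i * x) := by
  rw [show (3 : R) = 1 + 2 by norm_num, prod_range_add_add_mul,
    Nat.sum_antidiagonal_eq_sum_range_succ_mk, sum_range, ← sum_fiberwise _ (fun σ => σ.symm 0),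
    Fin.sum_univ_castSucc]
  simp only [sum_pow_mmp1011_symm_zero_eq, Fin.val_castSucc, Fin.val_last, Nat.choose_succ_self,
    Nat.cast_zero, zero_mul, add_zero]

end Decomposition

theorem stmt_19 (n : ℕ) (hn : 2 ≤ n) :
    (∑ σ ∈ Finset.univ.filter (fun σ : Equiv.Perm (Fin n) =>
        σ.symm ⟨0, by omega⟩ < σ.symm ⟨n - 1, by omega⟩),
      (Polynomial.X : Polynomial ℤ) ^ mmp1011 σ) =
      (∏ i ∈ Finset.range (n - 2),
        ((3 : Polynomial ℤ) + (i : Polynomial ℤ) * Polynomial.X)) ∧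
    (Finset.univ.filter (fun σ : Equiv.Perm (Fin n) =>
        σ.symm ⟨0, by omega⟩ < σ.symm ⟨n - 1, by omega⟩ ∧ mmp1011 σ = 0)).card =
      3 ^ (n - 2) := by
  obtain ⟨m, rfl⟩ : ∃ m, n = m + 2 := ⟨n - 2, by omega⟩
  refine ⟨sum_pow_mmp1011 Polynomial.X m, ?_⟩
  have h := sum_pow_mmp1011 (0 : ℕ) m
  simp only [zero_pow_eq, mul_zero, add_zero, sum_boole, filter_filter, prod_const, card_range,
    Nat.cast_id] at h
  exact h
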